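/- Let X be a nested almost convex set with convex layers R_1, …, R_k. Then for every 1 ≤ j ≤ k−1, |R_{j+1}| = |X_j| + 2, where X_j = R_1 ∪ ⋯ ∪ R_j is the set of points of X lying in the first j layers. -/

import Mathlib

open Set

noncomputable section

/-- Points of the plane. -/
abbrev Pt : Type := ℝ × ℝ

/-- The orientation determinant of the triple `(a, b, c)`:
`c` lies strictly to the left of the directed line from `a` to `b` iff `orient a b c > 0`. -/
def orient (a b c : Pt) : ℝ :=
  (b.1 - a.1) * (c.2 - a.2) - (b.2 - a.2) * (c.1 - a.1)

/-- A set of points is in general position if no three pairwise distinct points are collinear. -/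
def GenPos (X : Set Pt) : Prop :=
  ∀ a ∈ X, ∀ b ∈ X, ∀ c ∈ X, a ≠ b → a ≠ c → b ≠ c → orient a b c ≠ 0

/-- The set of extreme points of the convex hull of `S`. -/
def extremePts (S : Set Pt) : Set Pt := Set.extremePoints ℝ (convexHull ℝ S)

/-- Remove the extreme points of the convex hull (one peeling step of convex layers). -/
def peel (S : Set Pt) : Set Pt := S \ extremePts S

/-- `X` has exactly `k` convex layers. -/
def HasLayers (X : Set Pt) (k : ℕ) : Prop :=
  peel^[k] X = ∅ ∧ ∀ j < k, peel^[j] X ≠ ∅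

/-- `X_j`, the union of the `j` innermost convex layers (when `X` has `k` layers). -/
def layerSub (X : Set Pt) (k j : ℕ) : Set Pt := peel^[k - j] X

/-- `R_j`, the `j`-th convex layer of `X` (when `X` has `k` layers), `R_1` innermost. -/
def layer (X : Set Pt) (k j : ℕ) : Set Pt := extremePts (layerSub X k j)

/-- `X` is a nested almost convex set. -/
def IsNACS (X : Set Pt) : Prop :=
  X.Finite ∧ X.Nonempty ∧ GenPos X ∧
  ∀ k, HasLayers X k →
    ∀ j, 1 ≤ j → j ≤ k →
      ∀ a ∈ layer X k j, ∀ b ∈ layer X k j, ∀ c ∈ layer X k j,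
        a ≠ b → a ≠ c → b ≠ c →
        ∃! p : Pt, p ∈ layerSub X k (j - 1) ∩ interior (convexHull ℝ ({a, b, c} : Set Pt))

/-- `q` is a counterclockwise enumeration of `S`. -/
def CCWEnum {m : ℕ} (S : Set Pt) (q : Fin m → Pt) : Prop :=
  Function.Injective q ∧ Set.range q = S ∧
  ∀ a b c : Fin m, a < b → b < c → 0 < orient (q a) (q b) (q c)

/-- The ordered pair `(q1, q2)` of points of `R` is adoptable from `p`. -/
def AdoptablePair (R : Set Pt) (p q1 q2 : Pt) : Prop :=
  ∀ q3 ∈ R \ ({q1, q2} : Set Pt), p ∈ interior (convexHull ℝ ({q1, q2, q3} : Set Pt))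

/-- The `i`-th binary string of length `j` in lexicographic order (`false` before `true`). -/
def strOfNat (j i : ℕ) : List Bool :=
  (List.range j).map fun t => i.testBit (j - 1 - t)

/-- The numeric (lexicographic) rank of a binary string among strings of its length. -/
def natOfStr (s : List Bool) : ℕ := s.foldl (fun n b => 2 * n + b.toNat) 0

/-- The leftmost `k`-level descendant of the node `s`. -/
def firstStr (k : ℕ) (s : List Bool) : List Bool := s ++ List.replicate (k - s.length) false

/-- The rightmost `k`-level descendant of the node `s`. -/
def lastStr (k : ℕ) (s : List Bool) : List Bool := s ++ List.replicate (k - s.length) true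

/-- Non-root nodes of the tree `T₁(k)`: binary strings of length `1..k`. -/
def ValidNode1 (k : ℕ) (s : List Bool) : Prop := 1 ≤ s.length ∧ s.length ≤ k

/-- A type-1 labeling of `X`, given by its label function `x` (the inverse of `ψ`). -/
def IsLabeling1 (k : ℕ) (X : Set Pt) (x : List Bool → Pt) : Prop :=
  Set.InjOn x {s | ValidNode1 k s} ∧ x '' {s | ValidNode1 k s} = X

/-- A type-1 labeling is nested. -/
def Nested1 (k : ℕ) (X : Set Pt) (x : List Bool → Pt) : Prop :=
  ∀ j, 1 ≤ j → j ≤ k →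
    CCWEnum (layer X k j) fun i : Fin (2 ^ j) => x (strOfNat j i.val)

/-- A type-1 labeling is adoptable. -/
def Adoptable1 (k : ℕ) (X : Set Pt) (x : List Bool → Pt) : Prop :=
  ∀ s : List Bool, 1 ≤ s.length → s.length + 1 ≤ k →
    AdoptablePair (layer X k (s.length + 1)) (x s) (x (s ++ [false])) (x (s ++ [true]))

/-- `previous[R_k(u)]` for a type-1 labeling: the cyclic predecessor (in the left-to-right,
i.e. counterclockwise, order of the `k`-level) of `first[R_k(u)]`. -/
def prev1 (k : ℕ) (x : List Bool → Pt) (s : List Bool) : Pt :=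
  x (strOfNat k ((natOfStr (firstStr k s) + (2 ^ k - 1)) % 2 ^ k))

/-- `next[R_k(u)]` for a type-1 labeling: the cyclic successor of `last[R_k(u)]`. -/
def next1 (k : ℕ) (x : List Bool → Pt) (s : List Bool) : Pt :=
  x (strOfNat k ((natOfStr (lastStr k s) + 1) % 2 ^ k))

/-- A type-1 labeling is well laid. -/
def WellLaid1 (k : ℕ) (x : List Bool → Pt) : Prop :=
  ∀ s : List Bool, 1 ≤ s.length → s.length ≤ k →
    x s ∈ convexHull ℝ ({prev1 k x s, x (firstStr k s), x (lastStr k s)} : Set Pt) ∧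
    x s ∈ convexHull ℝ ({x (firstStr k s), x (lastStr k s), next1 k x s} : Set Pt)

/-- `X_u` for a type-1 labeling: the labels of the proper descendants of `s`. -/
def descSet1 (k : ℕ) (x : List Bool → Pt) (s : List Bool) : Set Pt :=
  x '' {t | ValidNode1 k t ∧ s <+: t ∧ s ≠ t}

/-- `X̄_u = X_u ∪ {x_u}` for a type-1 labeling. -/
def barSet1 (k : ℕ) (x : List Bool → Pt) (s : List Bool) : Set Pt :=
  insert (x s) (descSet1 k x s)

/-- A type-1 labeling is an internal separation. -/
def InternalSep1 (k : ℕ) (X : Set Pt) (x : List Bool → Pt) : Prop :=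
  ∀ s : List Bool, s.length + 1 ≤ k →
    ∀ y ∈ X \ descSet1 k x s,
      ∀ a ∈ barSet1 k x (s ++ [false]), ∀ b ∈ barSet1 k x (s ++ [true]),
        0 < orient a b y

/-- A type-1 labeling is an external separation. -/
def ExternalSep1 (k : ℕ) (X : Set Pt) (x : List Bool → Pt) : Prop :=
  ∀ s : List Bool, 1 ≤ s.length → s.length + 1 ≤ k →
    ∀ y ∈ X \ barSet1 k x s,
      (∀ a ∈ barSet1 k x (s ++ [false]), 0 < orient a (x s) y) ∧
      (∀ b ∈ barSet1 k x (s ++ [true]), 0 < orient (x s) b y)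

/-- Nodes of the tree `T₂(k)`: the root `none`, and pairs `(c, s)`. -/
abbrev Node2 : Type := Option (Fin 3 × List Bool)

/-- Valid nodes of `T₂(k)`: the root, and pairs `(c, s)` with `|s| ≤ k - 2`. -/
def ValidNode2 (k : ℕ) : Node2 → Prop
  | none => True
  | some (_, s) => s.length + 2 ≤ k

/-- A type-2 labeling of `X`, given by its label function `x` (the inverse of `ψ`). -/
def IsLabeling2 (k : ℕ) (X : Set Pt) (x : Node2 → Pt) : Prop :=
  Set.InjOn x {u | ValidNode2 k u} ∧ x '' {u | ValidNode2 k u} = X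

/-- The `i`-th node (left-to-right) of the `(j+2)`-level of `T₂(k)`. -/
def node2At (j i : ℕ) : Node2 :=
  some (⟨i / 2 ^ j % 3, by omega⟩, strOfNat j (i % 2 ^ j))

/-- A type-2 labeling is nested. -/
def Nested2 (k : ℕ) (X : Set Pt) (x : Node2 → Pt) : Prop :=
  CCWEnum (layer X k 1) (fun _ : Fin 1 => x none) ∧
  ∀ j : ℕ, j + 2 ≤ k →
    CCWEnum (layer X k (j + 2)) fun i : Fin (3 * 2 ^ j) => x (node2At j i.val)

/-- A type-2 labeling is adoptable. -/
def Adoptable2 (k : ℕ) (X : Set Pt) (x : Node2 → Pt) : Prop :=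
  ∀ (c : Fin 3) (s : List Bool), s.length + 3 ≤ k →
    AdoptablePair (layer X k (s.length + 3)) (x (some (c, s)))
      (x (some (c, s ++ [false]))) (x (some (c, s ++ [true])))

/-- `previous[R_k(u)]` for a type-2 labeling, `u = (c, s)`. -/
def prev2 (k : ℕ) (x : Node2 → Pt) (c : Fin 3) (s : List Bool) : Pt :=
  x (node2At (k - 2)
      ((c.val * 2 ^ (k - 2) + natOfStr (firstStr (k - 2) s) + (3 * 2 ^ (k - 2) - 1)) %
        (3 * 2 ^ (k - 2))))

/-- `next[R_k(u)]` for a type-2 labeling, `u = (c, s)`. -/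
def next2 (k : ℕ) (x : Node2 → Pt) (c : Fin 3) (s : List Bool) : Pt :=
  x (node2At (k - 2)
      ((c.val * 2 ^ (k - 2) + natOfStr (lastStr (k - 2) s) + 1) % (3 * 2 ^ (k - 2))))

/-- A type-2 labeling is well laid (the root is the only node with `R_k(u) = R_k`). -/
def WellLaid2 (k : ℕ) (x : Node2 → Pt) : Prop :=
  ∀ (c : Fin 3) (s : List Bool), s.length + 2 ≤ k →
    x (some (c, s)) ∈ convexHull ℝ
      ({prev2 k x c s, x (some (c, firstStr (k - 2) s)),
        x (some (c, lastStr (k - 2) s))} : Set Pt) ∧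
    x (some (c, s)) ∈ convexHull ℝ
      ({x (some (c, firstStr (k - 2) s)), x (some (c, lastStr (k - 2) s)),
        next2 k x c s} : Set Pt)

/-- `X_u` for a type-2 labeling and a non-root node `u = (c, s)`. -/
def descSet2 (k : ℕ) (x : Node2 → Pt) (c : Fin 3) (s : List Bool) : Set Pt :=
  x '' {u | ∃ t : List Bool, u = some (c, t) ∧ t.length + 2 ≤ k ∧ s <+: t ∧ s ≠ t}

/-- `X̄_u = X_u ∪ {x_u}` for a type-2 labeling and a non-root node `u = (c, s)`. -/
def barSet2 (k : ℕ) (x : Node2 → Pt) (c : Fin 3) (s : List Bool) : Set Pt :=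
  insert (x (some (c, s))) (descSet2 k x c s)

/-- A type-2 labeling is an internal separation. -/
def InternalSep2 (k : ℕ) (X : Set Pt) (x : Node2 → Pt) : Prop :=
  (∀ (c : Fin 3) (s : List Bool), s.length + 3 ≤ k →
    ∀ y ∈ X \ descSet2 k x c s,
      ∀ a ∈ barSet2 k x c (s ++ [false]), ∀ b ∈ barSet2 k x c (s ++ [true]),
        0 < orient a b y) ∧
  (∀ i : Fin 3,
    ∀ y ∈ X \ (barSet2 k x i [] ∪ barSet2 k x (i + 1) []),
      ∀ a ∈ barSet2 k x i [], ∀ b ∈ barSet2 k x (i + 1) [],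
        0 < orient a b y)

/-- A type-2 labeling is an external separation. -/
def ExternalSep2 (k : ℕ) (X : Set Pt) (x : Node2 → Pt) : Prop :=
  ∀ (c : Fin 3) (s : List Bool), s.length + 3 ≤ k →
    ∀ y ∈ X \ barSet2 k x c s,
      (∀ a ∈ barSet2 k x c (s ++ [false]), 0 < orient a (x (some (c, s))) y) ∧
      (∀ b ∈ barSet2 k x c (s ++ [true]), 0 < orient (x (some (c, s))) b y)

/-- One corner-refinement step: from `α_s = (q, o, p)` to `α_{s0}` (for `b = false`)
or `α_{s1}` (for `b = true`). -/
def cornerStep (α : Pt × Pt × Pt) (b : Bool) : Pt × Pt × Pt :=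
  let q := α.1
  let o := α.2.1
  let p := α.2.2
  if b then (o + (1 / 5 : ℝ) • (q - o), o + (1 / 5 : ℝ) • (p - o), o + (2 / 5 : ℝ) • (p - o))
  else (o + (2 / 5 : ℝ) • (q - o), o + (1 / 5 : ℝ) • (q - o), o + (1 / 5 : ℝ) • (p - o))

/-- The corner `α_s = (q_s, o_s, p_s)` assigned to the binary string `s` (with parameter `k`). -/
def corner (k : ℕ) (s : List Bool) : Pt × Pt × Pt :=
  s.foldl cornerStep
    (((0 : ℝ), (2 * 5 ^ (k + 1) : ℝ)), ((0 : ℝ), (0 : ℝ)), ((2 * 5 ^ (k + 1) : ℝ), (0 : ℝ)))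

/-- The point `y_v` for a binary string `v = s ++ [b]` of positive length. -/
def ypt (k : ℕ) (v : List Bool) : Pt :=
  let α := corner k v.dropLast
  if v.getLastD false then α.2.1 + (1 / 5 : ℝ) • (α.2.2 - α.2.1)
  else α.2.1 + (1 / 5 : ℝ) • (α.1 - α.2.1)

/-- The point `x_s`: the midpoint of `y_{s·0^(k+1−|s|)}` and `y_{s·1^(k+1−|s|)}`. -/
def xpt (k : ℕ) (s : List Bool) : Pt :=
  (1 / 2 : ℝ) •
    (ypt k (s ++ List.replicate (k + 1 - s.length) false) +
      ypt k (s ++ List.replicate (k + 1 - s.length) true))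

/-!
Peel the outer layer one ear at a time. Let `v` be a hull vertex with hull neighbours `u` and
`w`. The triangle `v u w` contains exactly one interior point `p`, and every other point of the
set, interior or on the hull, lies on the far side of the chord `u w`, where the hull is already
spanned by the hull vertices other than `v`. Removing `v` and `p` therefore leaves a set with
one hull vertex and one interior point fewer which still has exactly one interior point in every
hull triangle. When no interior points are left, no three hull vertices can remain, while a
nonempty interior forces at least three hull vertices; hence `|hull| = |interior| + 2`.
-/

lemma orient_rotate (a b c : Pt) : orient a b c = orient b c a := by unfold orient; ring

lemma orient_swap (a b c : Pt) : orient b a c = -orient a b c := by unfold orient; ring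

@[simp] lemma orient_self_left (a b : Pt) : orient a b a = 0 := by unfold orient; ring

@[simp] lemma orient_self_right (a b : Pt) : orient a b b = 0 := by unfold orient; ring

lemma orient_add_smul {s t : ℝ} (hst : s + t = 1) (a b x y : Pt) :
    orient a b (s • x + t • y) = s * orient a b x + t * orient a b y := by
  obtain rfl : t = 1 - s := by linarith
  simp only [orient, Prod.fst_add, Prod.snd_add, Prod.smul_fst, Prod.smul_snd, smul_eq_mul]
  ring

lemma orient_smul_eq (a b c z : Pt) :
    orient a b c • z = orient b c z • a + orient c a z • b + orient a b z • c := by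
  ext <;> simp only [orient, Prod.fst_add, Prod.snd_add, Prod.smul_fst, Prod.smul_snd,
    smul_eq_mul] <;> ring

lemma orient_add_orient_add_orient (a b c z : Pt) :
    orient b c z + orient c a z + orient a b z = orient a b c := by unfold orient; ring

lemma GenPos.mono {A B : Set Pt} (hA : GenPos A) (hBA : B ⊆ A) : GenPos B :=
  fun a ha b hb c hc => hA a (hBA ha) b (hBA hb) c (hBA hc)

lemma convex_setOf_orient_nonneg (a b : Pt) : Convex ℝ {y | 0 ≤ orient a b y} := by
  intro x hx y hy s t hs ht hst
  change 0 ≤ orient a b (s • x + t • y)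
  rw [orient_add_smul hst]
  exact add_nonneg (mul_nonneg hs hx) (mul_nonneg ht hy)

lemma orient_nonneg_of_mem_convexHull {S : Set Pt} {a b y : Pt}
    (hS : ∀ z ∈ S, 0 ≤ orient a b z) (hy : y ∈ convexHull ℝ S) : 0 ≤ orient a b y :=
  convexHull_min hS (convex_setOf_orient_nonneg a b) hy

/-- The barycentric coordinates of `z` are the three orientations divided by `orient a b c`. -/
lemma mem_convexHull_triangle {a b c z : Pt} (habc : 0 < orient a b c)
    (hab : 0 ≤ orient a b z) (hbc : 0 ≤ orient b c z) (hca : 0 ≤ orient c a z) :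
    z ∈ convexHull ℝ ({a, b, c} : Set Pt) := by
  set D := orient a b c
  have hz : z = (orient b c z / D) • a + (orient c a z / D) • b + (orient a b z / D) • c :=
    calc z = D⁻¹ • (D • z) := (inv_smul_smul₀ habc.ne' z).symm
      _ = _ := by rw [orient_smul_eq]; simp only [smul_add, smul_smul, div_eq_inv_mul]
  have hsum : orient b c z / D + orient c a z / D + orient a b z / D = 1 := by
    rw [← add_div, ← add_div, orient_add_orient_add_orient, div_self habc.ne']
  rw [hz]
  have key := (convex_convexHull ℝ ({a, b, c} : Set Pt)).sum_mem (t := Finset.univ)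
    (w := ![orient b c z / D, orient c a z / D, orient a b z / D]) (z := ![a, b, c])
    (by intro i _; fin_cases i <;> simp <;> positivity)
    (by simpa [Fin.sum_univ_three] using hsum)
    (by intro i _; fin_cases i <;> exact subset_convexHull ℝ _ (by simp))
  simpa [Fin.sum_univ_three] using key

lemma mem_interior_convexHull_triangle {a b c z : Pt}
    (hab : 0 < orient a b z) (hbc : 0 < orient b c z) (hca : 0 < orient c a z) :
    z ∈ interior (convexHull ℝ ({a, b, c} : Set Pt)) := by
  have hcont (p q : Pt) : Continuous (orient p q) := by unfold orient; fun_prop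
  have hopen : IsOpen {y : Pt | 0 < orient a b y ∧ 0 < orient b c y ∧ 0 < orient c a y} :=
    (isOpen_lt continuous_const (hcont a b)).inter
      ((isOpen_lt continuous_const (hcont b c)).inter (isOpen_lt continuous_const (hcont c a)))
  refine interior_maximal ?_ hopen ⟨hab, hbc, hca⟩
  rintro y ⟨h₁, h₂, h₃⟩
  have habc : 0 < orient a b c := by rw [← orient_add_orient_add_orient a b c y]; positivity
  exact mem_convexHull_triangle habc h₁.le h₂.le h₃.le

lemma orient_eq_zero_of_mem_segment {a b y : Pt} (hy : y ∈ segment ℝ a b) :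
    orient a b y = 0 := by
  obtain ⟨s, t, -, -, hst, rfl⟩ := hy
  simp [orient_add_smul hst]

lemma extremePts_subset (A : Set Pt) : extremePts A ⊆ A := extremePoints_convexHull_subset

lemma convexHull_extremePts {A : Set Pt} (hA : A.Finite) :
    convexHull ℝ (extremePts A) = convexHull ℝ A := by
  have hfin : (extremePts A).Finite := hA.subset (extremePts_subset A)
  rw [← (hfin.isClosed_convexHull ℝ).closure_eq]
  exact closure_convexHull_extremePoints (hA.isCompact_convexHull ℝ) (convex_convexHull ℝ A)

lemma mem_convexHull_extremePts {A : Set Pt} (hA : A.Finite) {y : Pt} (hy : y ∈ A) :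
    y ∈ convexHull ℝ (extremePts A) := by
  rw [convexHull_extremePts hA]
  exact subset_convexHull ℝ A hy

lemma notMem_convexHull_sdiff_of_mem_extremePts {A : Set Pt} {x : Pt}
    (hx : x ∈ extremePts A) : x ∉ convexHull ℝ (A \ {x}) := by
  rw [extremePts, (convex_convexHull ℝ A).mem_extremePoints_iff_mem_sdiff_convexHull_sdiff] at hx
  exact fun h => hx.2 (convexHull_mono (sdiff_subset_sdiff_left (subset_convexHull ℝ A)) h)

lemma mem_extremePts_of_subset {A B : Set Pt} {x : Pt} (hBA : B ⊆ A) (hx : x ∈ extremePts A)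
    (hxB : x ∈ B) : x ∈ extremePts B :=
  inter_extremePoints_subset_extremePoints_of_subset (convexHull_mono hBA)
    ⟨subset_convexHull ℝ B hxB, hx⟩

lemma three_le_ncard_extremePts {A : Set Pt} (hA : A.Finite) (hgp : GenPos A)
    (hne : (peel A).Nonempty) : 3 ≤ (extremePts A).ncard := by
  obtain ⟨y, hyA, hyR⟩ := hne
  have hy := mem_convexHull_extremePts hA hyA
  by_contra! h
  interval_cases hR : (extremePts A).ncard
  · rw [ncard_eq_zero (hA.subset (extremePts_subset A))] at hR
    simp [hR] at hy
  · obtain ⟨r, hr⟩ := ncard_eq_one.1 hR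
    rw [hr, convexHull_singleton] at hy
    exact hyR (hr ▸ hy)
  · obtain ⟨r₁, r₂, hr₁₂, hr⟩ := ncard_eq_two.1 hR
    have hr₁ : r₁ ∈ extremePts A := by simp [hr]
    have hr₂ : r₂ ∈ extremePts A := by simp [hr]
    rw [hr, convexHull_pair] at hy
    exact hgp r₁ (extremePts_subset A hr₁) r₂ (extremePts_subset A hr₂) y hyA hr₁₂
      (fun h => hyR (h ▸ hr₁)) (fun h => hyR (h ▸ hr₂)) (orient_eq_zero_of_mem_segment hy)

lemma exists_injOn_add_mul {S : Set Pt} (hS : S.Finite) :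
    ∃ t : ℝ, InjOn (fun z : Pt => z.1 + t * z.2) S := by
  set B : Set ℝ := ⋃ p ∈ S, ⋃ q ∈ S, {t | p ≠ q ∧ p.1 + t * p.2 = q.1 + t * q.2}
  have hB : B.Finite := hS.biUnion fun p _ => hS.biUnion fun q _ => by
    refine Set.Subsingleton.finite fun t₁ ⟨hpq, h₁⟩ t₂ ⟨_, h₂⟩ => ?_
    have h : (t₁ - t₂) * (p.2 - q.2) = 0 := by linarith
    rcases mul_eq_zero.1 h with h | h
    · linarith
    · have e : p.2 = q.2 := by linarith
      exact absurd (Prod.ext (by rw [e] at h₁; linarith) e) hpq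
  obtain ⟨t, ht⟩ := hB.infinite_compl.nonempty
  exact ⟨t, fun p hp q hq hpq =>
    by_contra fun hne => ht (mem_biUnion hp (mem_biUnion hq ⟨hne, hpq⟩))⟩

/-- Take `v` minimizing a generic linear functional; seen from `v`, the other points are ordered
by the slope `σ`, and `u`, `w` are the two extreme ones. -/
lemma exists_wedge {R : Set Pt} (hR : R.Finite) (hgp : GenPos R) (h3 : 3 ≤ R.ncard) :
    ∃ v ∈ R, ∃ u ∈ R \ {v}, ∃ w ∈ R \ {v}, 0 < orient v u w ∧
      ∀ z ∈ R, 0 ≤ orient v u z ∧ 0 ≤ orient w v z := by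
  obtain ⟨t, ht⟩ := exists_injOn_add_mul hR
  obtain ⟨v, hv, hvmin⟩ :=
    R.exists_min_image (fun z : Pt => z.1 + t * z.2) hR (nonempty_of_ncard_ne_zero (by omega))
  set α : Pt → ℝ := fun z => (z.1 - v.1) + t * (z.2 - v.2)
  set σ : Pt → ℝ := fun z => (z.2 - v.2) / α z
  have hα : ∀ z ∈ R \ {v}, 0 < α z := fun z ⟨hz, hzv⟩ => by
    have := (hvmin z hz).lt_of_ne fun h => hzv (ht hz hv h.symm)
    simp only [α]; linarith
  have horient : ∀ a ∈ R \ {v}, ∀ b ∈ R \ {v}, orient v a b = α a * α b * (σ b - σ a) := by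
    intro a ha b hb
    have := (hα a ha).ne'
    have := (hα b hb).ne'
    simp only [σ, orient]
    field_simp
    ring
  have hS : (R \ {v}).Finite := hR.sdiff
  have hS2 : 1 < (R \ {v}).ncard := by rw [ncard_sdiff_singleton_of_mem hv]; omega
  obtain ⟨u, hu, humin⟩ := (R \ {v}).exists_min_image σ hS (nonempty_of_ncard_ne_zero (by omega))
  obtain ⟨w, hw, hwmax⟩ := (R \ {v}).exists_max_image σ hS (nonempty_of_ncard_ne_zero (by omega))
  have hwedge : ∀ z ∈ R, 0 ≤ orient v u z ∧ 0 ≤ orient w v z := by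
    intro z hz
    by_cases hzv : z = v
    · simp [hzv]
    have hz' : z ∈ R \ {v} := ⟨hz, hzv⟩
    rw [orient_rotate w, horient u hu z hz', horient z hz' w hw]
    have := hα u hu; have := hα z hz'; have := hα w hw
    exact ⟨mul_nonneg (by positivity) (sub_nonneg.2 (humin z hz')),
      mul_nonneg (by positivity) (sub_nonneg.2 (hwmax z hz'))⟩
  refine ⟨v, hv, u, hu, w, hw, ?_, hwedge⟩
  obtain ⟨z, hz, hzu⟩ := exists_ne_of_one_lt_ncard hS2 u
  have huw : u ≠ w := by
    rintro rfl
    have hσ : σ z = σ u := le_antisymm (hwmax z hz) (humin z hz)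
    refine hgp v hv u hu.1 z hz.1 (Ne.symm hu.2) (Ne.symm hz.2) (Ne.symm hzu) ?_
    rw [horient u hu z hz, hσ, sub_self, mul_zero]
  exact (hwedge w hw.1).1.lt_of_ne
    (hgp v hv u hu.1 w hw.1 (Ne.symm hu.2) (Ne.symm hw.2) huw).symm

/-- `v, u, w` are consecutive counterclockwise vertices of the convex polygon `R`: all of `R`
lies in the angle `u v w`, and all of `R \ {v}` on the far side of the chord `uw`. -/
structure IsEar (R : Set Pt) (v u w : Pt) : Prop where
  mem : v ∈ R
  left_mem : u ∈ R \ {v}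
  right_mem : w ∈ R \ {v}
  orient_pos : 0 < orient v u w
  wedge : ∀ z ∈ R, 0 ≤ orient v u z ∧ 0 ≤ orient w v z
  chord : ∀ z ∈ R \ {v}, orient u w z ≤ 0

namespace IsEar

variable {R : Set Pt} {v u w y : Pt}

lemma left_ne_right (h : IsEar R v u w) : u ≠ w := by
  rintro rfl
  simpa using h.orient_pos

lemma wedge_of_mem_convexHull (h : IsEar R v u w) (hy : y ∈ convexHull ℝ R) :
    0 ≤ orient v u y ∧ 0 ≤ orient w v y :=
  ⟨orient_nonneg_of_mem_convexHull (fun z hz => (h.wedge z hz).1) hy,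
    orient_nonneg_of_mem_convexHull (fun z hz => (h.wedge z hz).2) hy⟩

lemma chord_of_mem_convexHull (h : IsEar R v u w) (hy : y ∈ convexHull ℝ (R \ {v})) :
    orient u w y ≤ 0 := by
  have := orient_nonneg_of_mem_convexHull (a := w) (b := u)
    (fun z hz => by rw [orient_swap]; linarith [h.chord z hz]) hy
  rw [orient_swap] at this
  linarith

/-- Write `y = a v + b z` with `z ∈ conv (R \ {v})`; if `z` is strictly beyond the chord, `y` lies
in the triangle `w u z`. -/
lemma mem_convexHull_sdiff (h : IsEar R v u w) (hy : y ∈ convexHull ℝ R)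
    (hf : orient u w y ≤ 0) : y ∈ convexHull ℝ (R \ {v}) := by
  rw [← insert_eq_of_mem h.mem, ← insert_sdiff_singleton,
    convexHull_insert ⟨u, h.left_mem⟩, mem_convexJoin] at hy
  obtain ⟨x, hx, z, hz, a, b, ha, hb, hab, rfl⟩ := hy
  rw [mem_singleton_iff] at hx
  subst x
  have hzR : z ∈ convexHull ℝ R := convexHull_mono sdiff_subset hz
  have hfv : 0 < orient u w v := by rw [← orient_rotate]; exact h.orient_pos
  rw [orient_add_smul hab] at hf
  rcases (h.chord_of_mem_convexHull hz).eq_or_lt with hfz | hfz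
  · obtain rfl : a = 0 := by nlinarith
    obtain rfl : b = 1 := by linarith
    simpa using hz
  · have hT : ({w, u, z} : Set Pt) ⊆ convexHull ℝ (R \ {v}) := by
      simp only [insert_subset_iff, singleton_subset_iff]
      exact ⟨subset_convexHull ℝ _ h.right_mem, subset_convexHull ℝ _ h.left_mem, hz⟩
    refine convexHull_min hT (convex_convexHull ℝ _) (_root_.mem_convexHull_triangle ?_ ?_ ?_ ?_)
    · rw [orient_swap]; linarith
    · rw [orient_swap, orient_add_smul hab]; linarith
    · rw [orient_add_smul hab, orient_self_right, ← orient_rotate]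
      have := (h.wedge_of_mem_convexHull hzR).1
      positivity
    · rw [orient_add_smul hab, orient_self_left, ← orient_rotate, ← orient_rotate]
      have := (h.wedge_of_mem_convexHull hzR).2
      positivity

end IsEar

lemma exists_isEar_extremePts {A : Set Pt} (hA : A.Finite) (hgp : GenPos A)
    (h3 : 3 ≤ (extremePts A).ncard) : ∃ v u w, IsEar (extremePts A) v u w := by
  obtain ⟨v, hv, u, hu, w, hw, hvuw, hwedge⟩ :=
    exists_wedge (hA.subset (extremePts_subset A)) (hgp.mono (extremePts_subset A)) h3
  refine ⟨v, u, w, hv, hu, hw, hvuw, hwedge, fun z hz => ?_⟩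
  by_contra! hf
  have hzT := mem_convexHull_triangle hvuw (hwedge z hz.1).1 hf.le (hwedge z hz.1).2
  have hzu : u ≠ z := by rintro rfl; simp at hf
  have hzw : w ≠ z := by rintro rfl; simp at hf
  refine notMem_convexHull_sdiff_of_mem_extremePts hz.1 (convexHull_mono ?_ hzT)
  simp only [insert_subset_iff, singleton_subset_iff]
  exact ⟨⟨extremePts_subset A hv, Ne.symm hz.2⟩, ⟨extremePts_subset A hu.1, hzu⟩,
    ⟨extremePts_subset A hw.1, hzw⟩⟩

/-- The condition that a nested almost convex set imposes on each layer, with `peel A` playing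
the role of `X_{j-1}`. -/
def PiercedOnce (A : Set Pt) : Prop :=
  ∀ a ∈ extremePts A, ∀ b ∈ extremePts A, ∀ c ∈ extremePts A, a ≠ b → a ≠ c → b ≠ c →
    ∃! p : Pt, p ∈ peel A ∩ interior (convexHull ℝ ({a, b, c} : Set Pt))

lemma ne_of_mem_peel_of_mem_extremePts {A : Set Pt} {x r : Pt} (hx : x ∈ peel A)
    (hr : r ∈ extremePts A) : x ≠ r :=
  fun h => hx.2 (h ▸ hr)

lemma ncard_extremePts_le_two {A : Set Pt} (hA : A.Finite) (hpierce : PiercedOnce A)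
    (hpeel : peel A = ∅) : (extremePts A).ncard ≤ 2 := by
  by_contra! h
  obtain ⟨a, ha, b, hb, c, hc, hab, hac, hbc⟩ :=
    (two_lt_ncard (hA.subset (extremePts_subset A))).1 h
  obtain ⟨p, hp, -⟩ := hpierce a ha b hb c hc hab hac hbc
  simpa [hpeel] using hp.1

section EarRemoval

variable {A : Set Pt} {v u w p : Pt}

lemma orient_pos_of_mem_interior_ear (hgp : GenPos A) (h : IsEar (extremePts A) v u w)
    (hp : p ∈ peel A ∩ interior (convexHull ℝ ({v, u, w} : Set Pt))) : 0 < orient u w p := by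
  have hvert : ∀ z ∈ ({v, u, w} : Set Pt), 0 ≤ orient u w z := by
    rintro z (rfl | rfl | rfl)
    · rw [← orient_rotate]; exact h.orient_pos.le
    · simp
    · simp
  refine (orient_nonneg_of_mem_convexHull hvert (interior_subset hp.2)).lt_of_ne (Ne.symm ?_)
  exact hgp u (extremePts_subset A h.left_mem.1) w (extremePts_subset A h.right_mem.1) p hp.1.1
    h.left_ne_right (ne_of_mem_peel_of_mem_extremePts hp.1 h.left_mem.1).symm
    (ne_of_mem_peel_of_mem_extremePts hp.1 h.right_mem.1).symm

/-- A point of `peel A` on the near side of the chord would lie in the interior of the ear. -/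
lemma orient_neg_of_mem_peel (hA : A.Finite) (hgp : GenPos A) (h : IsEar (extremePts A) v u w)
    (hpuniq : ∀ q ∈ peel A ∩ interior (convexHull ℝ ({v, u, w} : Set Pt)), q = p)
    {x : Pt} (hx : x ∈ peel A) (hxp : x ≠ p) : orient u w x < 0 := by
  by_contra! hf
  have hvA := extremePts_subset A h.mem
  have huA := extremePts_subset A h.left_mem.1
  have hwA := extremePts_subset A h.right_mem.1
  have hxv := ne_of_mem_peel_of_mem_extremePts hx h.mem
  have hxu := ne_of_mem_peel_of_mem_extremePts hx h.left_mem.1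
  have hxw := ne_of_mem_peel_of_mem_extremePts hx h.right_mem.1
  obtain ⟨hvu, hwv⟩ := h.wedge_of_mem_convexHull (mem_convexHull_extremePts hA hx.1)
  refine hxp (hpuniq x ⟨hx, mem_interior_convexHull_triangle ?_ ?_ ?_⟩)
  · exact hvu.lt_of_ne (hgp v hvA u huA x hx.1 (Ne.symm h.left_mem.2) hxv.symm hxu.symm).symm
  · exact hf.lt_of_ne (hgp u huA w hwA x hx.1 h.left_ne_right hxu.symm hxw.symm).symm
  · exact hwv.lt_of_ne (hgp w hwA v hvA x hx.1 h.right_mem.2 hxw.symm hxv.symm).symm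

lemma extremePts_sdiff_ear (hA : A.Finite) (hgp : GenPos A) (h : IsEar (extremePts A) v u w)
    (hp : p ∈ peel A)
    (hpuniq : ∀ q ∈ peel A ∩ interior (convexHull ℝ ({v, u, w} : Set Pt)), q = p) :
    extremePts (A \ {v, p}) = extremePts A \ {v} := by
  ext x
  constructor
  · intro hx
    obtain ⟨hxA, hxvp⟩ := extremePts_subset _ hx
    by_cases hxR : x ∈ extremePts A
    · exact ⟨hxR, fun hxv => hxvp (Or.inl hxv)⟩
    have hxp : x ≠ p := fun hxp => hxvp (Or.inr hxp)
    have hf := orient_neg_of_mem_peel hA hgp h hpuniq ⟨hxA, hxR⟩ hxp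
    refine absurd (convexHull_mono ?_
      (h.mem_convexHull_sdiff (mem_convexHull_extremePts hA hxA) hf.le))
      (notMem_convexHull_sdiff_of_mem_extremePts hx)
    rintro r ⟨hrR, hrv⟩
    refine ⟨⟨extremePts_subset A hrR, ?_⟩, fun hrx => hxR (hrx ▸ hrR)⟩
    rintro (hrv' | hrp)
    · exact hrv hrv'
    · exact ne_of_mem_peel_of_mem_extremePts hp hrR hrp.symm
  · rintro ⟨hxR, hxv⟩
    refine mem_extremePts_of_subset sdiff_subset hxR ⟨extremePts_subset A hxR, ?_⟩
    rintro (hxv' | hxp)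
    · exact hxv hxv'
    · exact ne_of_mem_peel_of_mem_extremePts hp hxR hxp.symm

lemma peel_sdiff_ear (hv : v ∈ extremePts A)
    (hext : extremePts (A \ {v, p}) = extremePts A \ {v}) :
    peel (A \ {v, p}) = peel A \ {p} := by
  ext x
  rw [peel, hext]
  constructor
  · rintro ⟨⟨hxA, hxvp⟩, hxn⟩
    exact ⟨⟨hxA, fun hxR => hxn ⟨hxR, fun hxv => hxvp (Or.inl hxv)⟩⟩,
      fun hxp => hxvp (Or.inr hxp)⟩
  · rintro ⟨⟨hxA, hxR⟩, hxp⟩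
    refine ⟨⟨hxA, ?_⟩, fun hx => hxR hx.1⟩
    rintro (rfl | rfl)
    · exact hxR hv
    · exact hxp rfl

end EarRemoval

lemma exists_ear_removal {A : Set Pt} (hA : A.Finite) (hgp : GenPos A)
    (hpierce : PiercedOnce A) (hne : (peel A).Nonempty) :
    ∃ A' ⊆ A, PiercedOnce A' ∧ (extremePts A').ncard + 1 = (extremePts A).ncard ∧
      (peel A').ncard + 1 = (peel A).ncard := by
  obtain ⟨v, u, w, h⟩ := exists_isEar_extremePts hA hgp (three_le_ncard_extremePts hA hgp hne)
  obtain ⟨p, hp, hpuniq⟩ := hpierce v h.mem u h.left_mem.1 w h.right_mem.1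
    (Ne.symm h.left_mem.2) (Ne.symm h.right_mem.2) h.left_ne_right
  have hext := extremePts_sdiff_ear hA hgp h hp.1 hpuniq
  have hpeel := peel_sdiff_ear h.mem hext
  refine ⟨A \ {v, p}, sdiff_subset, ?_, ?_, ?_⟩
  · intro a ha b hb c hc hab hac hbc
    rw [hext] at ha hb hc
    rw [hpeel]
    obtain ⟨q, hq, hquniq⟩ := hpierce a ha.1 b hb.1 c hc.1 hab hac hbc
    refine ⟨q, ⟨⟨hq.1, ?_⟩, hq.2⟩, fun q' hq' => hquniq q' ⟨hq'.1.1, hq'.2⟩⟩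
    have habc : ({a, b, c} : Set Pt) ⊆ extremePts A \ {v} := by
      simp only [insert_subset_iff, singleton_subset_iff]
      exact ⟨ha, hb, hc⟩
    have hq_far := h.chord_of_mem_convexHull (convexHull_mono habc (interior_subset hq.2))
    have hp_near := orient_pos_of_mem_interior_ear hgp h hp
    rintro rfl
    linarith
  · rw [hext, ncard_sdiff_singleton_add_one h.mem (hA.subset (extremePts_subset A))]
  · rw [hpeel, ncard_sdiff_singleton_add_one hp.1 (hA.subset sdiff_subset)]

theorem ncard_extremePts_eq_ncard_peel_add_two {A : Set Pt} (hA : A.Finite) (hgp : GenPos A)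
    (hpierce : PiercedOnce A) (hne : (peel A).Nonempty) :
    (extremePts A).ncard = (peel A).ncard + 2 := by
  induction hn : (peel A).ncard using Nat.strong_induction_on generalizing A with
  | _ n ih =>
  obtain ⟨A', hA'A, hpierce', hR, hP⟩ := exists_ear_removal hA hgp hpierce hne
  have hA' := hA.subset hA'A
  rcases (peel A').eq_empty_or_nonempty with hempty | hne'
  · have := ncard_extremePts_le_two hA' hpierce' hempty
    have := three_le_ncard_extremePts hA hgp hne
    rw [hempty, ncard_empty] at hP
    omega
  · have := ih _ (by omega) hA' (hgp.mono hA'A) hpierce' hne' rfl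
    omega

lemma iterate_peel_subset (X : Set Pt) (m : ℕ) : peel^[m] X ⊆ X := by
  induction m with
  | zero => exact subset_rfl
  | succ m ih =>
    rw [Function.iterate_succ_apply']
    exact sdiff_subset.trans ih

/-- For every `1 ≤ j ≤ k−1`, `|R_{j+1}| = |X_j| + 2`. -/
theorem nacs_next_layer_card (X : Set Pt) (hX : IsNACS X) (k : ℕ) (hk : HasLayers X k)
    (j : ℕ) (hj1 : 1 ≤ j) (hjk : j + 1 ≤ k) :
    (layer X k (j + 1)).ncard = (layerSub X k j).ncard + 2 := by
  obtain ⟨hXfin, -, hXgp, hlayers⟩ := hX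
  set S := layerSub X k (j + 1)
  have hSX : S ⊆ X := iterate_peel_subset X _
  have hpeelS : layerSub X k j = peel S := by
    rw [layerSub, show k - j = k - (j + 1) + 1 by omega, Function.iterate_succ_apply']
    rfl
  have hne : (peel S).Nonempty := hpeelS ▸ nonempty_iff_ne_empty.2 (hk.2 (k - j) (by omega))
  have hpierce : PiercedOnce S := by
    simpa only [PiercedOnce, layer, Nat.add_sub_cancel, hpeelS] using
      hlayers k hk (j + 1) (by omega) hjk
  rw [hpeelS]
  exact ncard_extremePts_eq_ncard_peel_add_two (hXfin.subset hSX) (hXgp.mono hSX) hpierce hne
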